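/- arXiv:1501.07530 — 5 statements merged into one kernel-verified Lean document; each statement's English description precedes it below -/
import Mathlib

section
/- Let A₁ be the first Weyl algebra over k, i.e. the k-algebra generated by a, c subject to a·c = c·a + 1 (realized as the quotient of the free algebra k⟨a,c⟩ by the two-sided ideal generated by a·c − c·a − 1). If σ is a k-algebra automorphism of A₁ satisfying σ(c) = c, then there exists a polynomial g ∈ k[X] such that σ(a) = a − g(c). -/
open Polynomial

noncomputable section

section Aux
variable {k : Type} [Field k] {A : Type} [Ring A] [Algebra k A]

lemma a_mul_c_pow (a c : A) (h : a * c = c * a + 1) (n : ℕ) :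
    a * c ^ (n + 1) = c ^ (n + 1) * a + (n + 1) • c ^ n := by
  induction n with
  | zero => simpa using h
  | succ n ih =>
    calc a * c ^ (n + 2) = (a * c ^ (n + 1)) * c := by rw [pow_succ, ← mul_assoc]
    _ = (c ^ (n + 1) * a + (n + 1) • c ^ n) * c := by rw [ih]
    _ = c ^ (n + 1) * (a * c) + (n + 1) • (c ^ n * c) := by
        rw [add_mul, mul_assoc, smul_mul_assoc]
    _ = c ^ (n + 1) * (c * a + 1) + (n + 1) • c ^ (n + 1) := by rw [h, ← pow_succ]
    _ = c ^ (n + 2) * a + c ^ (n + 1) + (n + 1) • c ^ (n + 1) := by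
        rw [mul_add, mul_one, ← mul_assoc, ← pow_succ]
    _ = c ^ (n + 2) * a + (n + 2) • c ^ (n + 1) := by
        rw [add_assoc, succ_nsmul (c ^ (n + 1)) (n + 1),
          add_comm (c ^ (n + 1)) ((n + 1) • c ^ (n + 1))]

lemma a_pow_mul_c (a c : A) (h : a * c = c * a + 1) (n : ℕ) :
    a ^ (n + 1) * c = c * a ^ (n + 1) + (n + 1) • a ^ n := by
  induction n with
  | zero => simpa using h
  | succ n ih =>
    calc a ^ (n + 2) * c = a * (a ^ (n + 1) * c) := by rw [pow_succ', mul_assoc]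
    _ = a * (c * a ^ (n + 1) + (n + 1) • a ^ n) := by rw [ih]
    _ = (a * c) * a ^ (n + 1) + (n + 1) • (a * a ^ n) := by
        rw [mul_add, ← mul_assoc, mul_smul_comm]
    _ = (c * a + 1) * a ^ (n + 1) + (n + 1) • a ^ (n + 1) := by rw [h, ← pow_succ']
    _ = c * a ^ (n + 2) + a ^ (n + 1) + (n + 1) • a ^ (n + 1) := by
        rw [add_mul, one_mul, mul_assoc, ← pow_succ']
    _ = c * a ^ (n + 2) + (n + 2) • a ^ (n + 1) := by
        rw [add_assoc, succ_nsmul (a ^ (n + 1)) (n + 1),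
          add_comm (a ^ (n + 1)) ((n + 1) • a ^ (n + 1))]

lemma a_pow_mul_c' (a c : A) (h : a * c = c * a + 1) (n : ℕ) :
    a ^ n * c = c * a ^ n + n • a ^ (n - 1) := by
  cases n with
  | zero => simp
  | succ n => simpa using a_pow_mul_c a c h n

lemma a_mul_aeval (a c : A) (h : a * c = c * a + 1) (p : k[X]) :
    a * aeval c p = aeval c p * a + aeval c (derivative p) := by
  induction p using Polynomial.induction_on with
  | C r => simp [Algebra.commutes]
  | add p q hp hq =>
    simp only [map_add, mul_add, add_mul, hp, hq, derivative_add]; abel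
  | monomial n r _ =>
    have h1 := a_mul_c_pow a c h n
    simp only [map_mul, aeval_C, map_pow, aeval_X, derivative_mul, derivative_C, zero_mul,
      derivative_X_pow, zero_add, Nat.add_sub_cancel, map_natCast, Nat.cast_add, Nat.cast_one]
    rw [← mul_assoc, ← Algebra.commutes r a, mul_assoc, h1, mul_add, ← mul_assoc, nsmul_eq_mul]
    push_cast
    ring_nf
end Aux

/-- The defining relation of the first Weyl algebra: `a·c = c·a + 1`,
where `a = ι 0` and `c = ι 1` in the free algebra on two generators. -/
inductive WeylRel (k : Type) [Field k] :
    FreeAlgebra k (Fin 2) → FreeAlgebra k (Fin 2) → Prop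
  | ac : WeylRel k (FreeAlgebra.ι k 0 * FreeAlgebra.ι k 1)
      (FreeAlgebra.ι k 1 * FreeAlgebra.ι k 0 + 1)

/-- The first Weyl algebra over `k`. -/
abbrev Weyl (k : Type) [Field k] := RingQuot (WeylRel k)

section WeylAux

variable (k : Type) [Field k]

def WA : Weyl k := RingQuot.mkAlgHom k (WeylRel k) (FreeAlgebra.ι k 0)
def WC : Weyl k := RingQuot.mkAlgHom k (WeylRel k) (FreeAlgebra.ι k 1)

lemma weyl_rel : WA k * WC k = WC k * WA k + 1 := by
  have := RingQuot.mkAlgHom_rel k (WeylRel.ac (k := k))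
  simpa [WA, WC, map_mul, map_add, map_one] using this

def rhoGen : Fin 2 → Module.End k k[X] :=
  ![Polynomial.derivative, Algebra.lmul k k[X] X]

lemma rho_compat : ∀ ⦃x y⦄, WeylRel k x y →
    FreeAlgebra.lift k (rhoGen k) x = FreeAlgebra.lift k (rhoGen k) y := by
  rintro x y ⟨⟩
  simp only [map_mul, map_add, map_one, FreeAlgebra.lift_ι_apply]
  refine LinearMap.ext fun p => ?_
  simp only [rhoGen, Module.End.mul_apply, LinearMap.add_apply, Module.End.one_apply,
    Matrix.cons_val_zero, Matrix.cons_val_one, Matrix.head_cons,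
    Algebra.coe_lmul_eq_mul, LinearMap.mul_apply', derivative_mul, derivative_X]
  ring

def rho : Weyl k →ₐ[k] Module.End k k[X] :=
  RingQuot.liftAlgHom k ⟨FreeAlgebra.lift k (rhoGen k), rho_compat k⟩

lemma rho_a : rho k (WA k) = Polynomial.derivative := by
  simp [rho, WA, RingQuot.liftAlgHom_mkAlgHom_apply, FreeAlgebra.lift_ι_apply, rhoGen]

lemma rho_c : rho k (WC k) = Algebra.lmul k k[X] X := by
  simp [rho, WC, RingQuot.liftAlgHom_mkAlgHom_apply, FreeAlgebra.lift_ι_apply, rhoGen]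

lemma rho_aeval (p : k[X]) : rho k (aeval (WC k) p) = Algebra.lmul k k[X] p := by
  rw [← aeval_algHom_apply, rho_c, aeval_algHom_apply, aeval_X_left_apply]


lemma rho_term (p : k[X]) (j : ℕ) (q : k[X]) :
    rho k (aeval (WC k) p * WA k ^ j) q = p * derivative^[j] q := by
  rw [map_mul, map_pow, rho_a, rho_aeval, Module.End.mul_apply, Module.End.pow_apply,
    Algebra.coe_lmul_eq_mul, LinearMap.mul_apply']

lemma indep [CharZero k] (n : ℕ) (p : ℕ → k[X])
    (h : ∑ j ∈ Finset.range n, aeval (WC k) (p j) * WA k ^ j = 0) :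
    ∀ j < n, p j = 0 := by
  have H : ∀ m : ℕ, ∑ j ∈ Finset.range n, p j * derivative^[j] ((X : k[X]) ^ m) = 0 := by
    intro m
    have h2 := congrArg (rho k) h
    rw [map_sum, map_zero] at h2
    have h3 := LinearMap.congr_fun h2 ((X : k[X]) ^ m)
    rw [LinearMap.sum_apply] at h3
    simpa only [rho_term, LinearMap.zero_apply] using h3
  intro j
  induction j using Nat.strong_induction_on with
  | _ j ih =>
    intro hj
    have hH := H j
    rw [Finset.sum_eq_single_of_mem j (Finset.mem_range.2 hj)] at hH
    · rw [iterate_derivative_X_pow_eq_smul, Nat.descFactorial_self, Nat.sub_self, pow_zero,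
        mul_smul_comm, mul_one] at hH
      have hf : ((j.factorial : k)) ≠ 0 := Nat.cast_ne_zero.2 j.factorial_ne_zero
      exact (smul_eq_zero.1 hH).resolve_left hf
    · intro i hi hij
      rcases lt_or_gt_of_ne hij with hlt | hgt
      · rw [ih i hlt (lt_trans hlt hj), zero_mul]
      · rw [iterate_derivative_X_pow_eq_smul, Nat.descFactorial_eq_zero_iff_lt.2 hgt,
          Nat.cast_zero, zero_smul, mul_zero]


def RepP (x : Weyl k) : Prop :=
  ∃ n, ∃ p : ℕ → k[X], x = ∑ j ∈ Finset.range n, aeval (WC k) (p j) * WA k ^ j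

lemma sum_extend (n N : ℕ) (hnN : n ≤ N) (p : ℕ → k[X]) :
    ∑ j ∈ Finset.range n, aeval (WC k) (p j) * WA k ^ j
      = ∑ j ∈ Finset.range N, aeval (WC k) (if j < n then p j else 0) * WA k ^ j := by
  calc ∑ j ∈ Finset.range n, aeval (WC k) (p j) * WA k ^ j
      = ∑ j ∈ Finset.range n, aeval (WC k) (if j < n then p j else 0) * WA k ^ j :=
        Finset.sum_congr rfl fun j hj => by rw [if_pos (Finset.mem_range.1 hj)]
    _ = _ := Finset.sum_subset (Finset.range_subset_range.2 hnN) fun x _ hnx => by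
        rw [if_neg (by simpa using hnx), map_zero, zero_mul]

lemma RepP_add {x y : Weyl k} (hx : RepP k x) (hy : RepP k y) : RepP k (x + y) := by
  obtain ⟨n, p, rfl⟩ := hx
  obtain ⟨m, q, rfl⟩ := hy
  refine ⟨max n m, fun j => (if j < n then p j else 0) + (if j < m then q j else 0), ?_⟩
  rw [sum_extend k n (max n m) (le_max_left n m) p,
    sum_extend k m (max n m) (le_max_right n m) q, ← Finset.sum_add_distrib]
  exact Finset.sum_congr rfl fun j _ => by rw [map_add, add_mul]

lemma RepP_smul (r : k) {x : Weyl k} (hx : RepP k x) : RepP k (r • x) := by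
  obtain ⟨n, p, rfl⟩ := hx
  refine ⟨n, fun j => r • p j, ?_⟩
  rw [Finset.smul_sum]
  exact Finset.sum_congr rfl fun j _ => by rw [map_smul, smul_mul_assoc]

lemma RepP_one : RepP k 1 := by
  refine ⟨1, fun _ => 1, by simp⟩

lemma RepP_mul_a {x : Weyl k} (hx : RepP k x) : RepP k (x * WA k) := by
  obtain ⟨n, p, rfl⟩ := hx
  refine ⟨n + 1, fun j => if j = 0 then 0 else p (j - 1), ?_⟩
  rw [Finset.sum_range_succ', Finset.sum_mul]
  simp [pow_succ, mul_assoc]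

lemma shift_sum (n : ℕ) (p : ℕ → k[X]) :
    ∑ j ∈ Finset.range n, j • (aeval (WC k) (p j) * WA k ^ (j - 1))
      = ∑ i ∈ Finset.range (n - 1), aeval (WC k) ((i + 1) • p (i + 1)) * WA k ^ i := by
  cases n with
  | zero => simp
  | succ n =>
    rw [Finset.sum_range_succ']
    simp [map_nsmul, smul_mul_assoc, mul_assoc]

lemma RepP_mul_c {x : Weyl k} (hx : RepP k x) : RepP k (x * WC k) := by
  obtain ⟨n, p, rfl⟩ := hx
  have hterm : ∀ j, (aeval (WC k) (p j) * WA k ^ j) * WC k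
      = aeval (WC k) (X * p j) * WA k ^ j + j • (aeval (WC k) (p j) * WA k ^ (j - 1)) := by
    intro j
    rw [mul_assoc, a_pow_mul_c' (WA k) (WC k) (weyl_rel k) j, mul_add, mul_smul_comm,
      ← mul_assoc, map_mul, aeval_X]
    congr 2
    calc aeval (WC k) (p j) * WC k = aeval (WC k) (p j * X) := by rw [map_mul, aeval_X]
    _ = aeval (WC k) (X * p j) := by rw [mul_comm]
    _ = WC k * aeval (WC k) (p j) := by rw [map_mul, aeval_X]
  rw [Finset.sum_mul]
  simp only [hterm, Finset.sum_add_distrib, shift_sum]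
  exact RepP_add k ⟨n, fun j => X * p j, rfl⟩ ⟨n - 1, fun i => (i + 1) • p (i + 1), rfl⟩

lemma RepP_all (x : Weyl k) : RepP k x := by
  obtain ⟨y, rfl⟩ := RingQuot.mkAlgHom_surjective k (WeylRel k) x
  have key : ∀ w, RepP k w → RepP k (w * RingQuot.mkAlgHom k (WeylRel k) y) := by
    induction y using FreeAlgebra.induction with
    | grade0 r =>
      intro w hw
      rw [AlgHom.commutes, ← Algebra.commutes r, ← Algebra.smul_def]
      exact RepP_smul k r hw
    | grade1 i =>
      intro w hw
      fin_cases i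
      · exact RepP_mul_a k hw
      · exact RepP_mul_c k hw
    | mul y z hy hz =>
      intro w hw
      rw [map_mul, ← mul_assoc]
      exact hz _ (hy _ hw)
    | add y z hy hz =>
      intro w hw
      rw [map_add, mul_add]
      exact RepP_add k (hy _ hw) (hz _ hw)
  simpa using key 1 (RepP_one k)


lemma aeval_comm_c (q : k[X]) : aeval (WC k) q * WC k = WC k * aeval (WC k) q := by
  calc aeval (WC k) q * WC k = aeval (WC k) (q * X) := by rw [map_mul, aeval_X]
  _ = aeval (WC k) (X * q) := by rw [mul_comm]
  _ = WC k * aeval (WC k) q := by rw [map_mul, aeval_X]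

lemma central [CharZero k] (u : Weyl k) (hu : u * WC k = WC k * u) :
    ∃ g : k[X], u = aeval (WC k) g := by
  obtain ⟨n, p, rfl⟩ := RepP_all k u
  have hterm : ∀ j, (aeval (WC k) (p j) * WA k ^ j) * WC k
      - WC k * (aeval (WC k) (p j) * WA k ^ j)
      = j • (aeval (WC k) (p j) * WA k ^ (j - 1)) := by
    intro j
    rw [mul_assoc, a_pow_mul_c' (WA k) (WC k) (weyl_rel k) j, mul_add, mul_smul_comm,
      ← mul_assoc (aeval (WC k) (p j)), aeval_comm_c, mul_assoc]
    abel
  have h0 : ∑ j ∈ Finset.range n, j • (aeval (WC k) (p j) * WA k ^ (j - 1)) = 0 := by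
    calc ∑ j ∈ Finset.range n, j • (aeval (WC k) (p j) * WA k ^ (j - 1))
        = ∑ j ∈ Finset.range n, ((aeval (WC k) (p j) * WA k ^ j) * WC k
            - WC k * (aeval (WC k) (p j) * WA k ^ j)) :=
          Finset.sum_congr rfl fun j _ => (hterm j).symm
      _ = (∑ j ∈ Finset.range n, aeval (WC k) (p j) * WA k ^ j) * WC k
            - WC k * ∑ j ∈ Finset.range n, aeval (WC k) (p j) * WA k ^ j := by
          rw [Finset.sum_sub_distrib, Finset.sum_mul, Finset.mul_sum]
      _ = 0 := by rw [hu, sub_self]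
  rw [shift_sum] at h0
  have hind := indep k (n - 1) _ h0
  have hp : ∀ j, 1 ≤ j → j < n → p j = 0 := by
    intro j h1 h2
    obtain ⟨i, rfl⟩ : ∃ i, j = i + 1 := ⟨j - 1, by omega⟩
    have h3 := hind i (by omega)
    have h4 : ((i + 1 : ℕ) : k[X]) ≠ 0 := Nat.cast_ne_zero.2 (by omega)
    rw [nsmul_eq_mul] at h3
    exact (mul_eq_zero.1 h3).resolve_left h4
  cases n with
  | zero => exact ⟨0, by simp⟩
  | succ m =>
    refine ⟨p 0, ?_⟩
    rw [Finset.sum_range_succ']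
    have : ∀ i ∈ Finset.range m, aeval (WC k) (p (i + 1)) * WA k ^ (i + 1) = 0 := by
      intro i hi
      rw [hp (i + 1) (by omega) (by simpa using Finset.mem_range.1 hi), map_zero, zero_mul]
    rw [Finset.sum_eq_zero this, zero_add, pow_zero, mul_one]


end WeylAux

theorem stmt0 (k : Type) [Field k] [IsAlgClosed k] [CharZero k]
    (a c : Weyl k)
    (ha : a = RingQuot.mkAlgHom k (WeylRel k) (FreeAlgebra.ι k 0))
    (hc : c = RingQuot.mkAlgHom k (WeylRel k) (FreeAlgebra.ι k 1))
    (σ : Weyl k ≃ₐ[k] Weyl k) (hσc : σ c = c) :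
    ∃ g : k[X], σ a = a - aeval c g := by
  have ha' : a = WA k := ha
  have hc' : c = WC k := hc
  subst ha' hc'
  have hrel := weyl_rel k
  have hσrel : σ (WA k) * WC k = WC k * σ (WA k) + 1 := by
    calc σ (WA k) * WC k = σ (WA k) * σ (WC k) := by rw [hσc]
    _ = σ (WA k * WC k) := (map_mul σ _ _).symm
    _ = σ (WC k * WA k + 1) := by rw [hrel]
    _ = WC k * σ (WA k) + 1 := by rw [map_add, map_mul, map_one, hσc]
  have hu : (σ (WA k) - WA k) * WC k = WC k * (σ (WA k) - WA k) := by
    rw [sub_mul, mul_sub, hσrel, hrel]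
    abel
  obtain ⟨g, hg⟩ := central k _ hu
  refine ⟨-g, ?_⟩
  rw [map_neg, sub_neg_eq_add, ← hg]
  abel

end
end

section
/- In P(f,g), the element u = d − a satisfies u·c = c·u and u·a = (a − g(c))·u, and u is normal, i.e. u·P(f,g) = P(f,g)·u. -/
open Polynomial

noncomputable section

/-- Defining relations of `P(f,g)`: with `a = ι 0`, `c = ι 1`, `d = ι 2`,
`a·c = c·a + f(c)`, `d·c = c·d + f(c)`, `d·a = (a − g(c))·d + g(c)·a`. -/
inductive PRel (k : Type) [Field k] (f g : k[X]) :
    FreeAlgebra k (Fin 3) → FreeAlgebra k (Fin 3) → Prop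
  | ac : PRel k f g (FreeAlgebra.ι k 0 * FreeAlgebra.ι k 1)
      (FreeAlgebra.ι k 1 * FreeAlgebra.ι k 0 + aeval (FreeAlgebra.ι k 1) f)
  | dc : PRel k f g (FreeAlgebra.ι k 2 * FreeAlgebra.ι k 1)
      (FreeAlgebra.ι k 1 * FreeAlgebra.ι k 2 + aeval (FreeAlgebra.ι k 1) f)
  | da : PRel k f g (FreeAlgebra.ι k 2 * FreeAlgebra.ι k 0)
      ((FreeAlgebra.ι k 0 - aeval (FreeAlgebra.ι k 1) g) * FreeAlgebra.ι k 2
        + aeval (FreeAlgebra.ι k 1) g * FreeAlgebra.ι k 0)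

/-- The algebra `P(f,g)`. -/
abbrev PAlg (k : Type) [Field k] (f g : k[X]) := RingQuot (PRel k f g)

/-- The generator `a` of `P(f,g)`. -/
def Pa (k : Type) [Field k] (f g : k[X]) : PAlg k f g :=
  RingQuot.mkAlgHom k (PRel k f g) (FreeAlgebra.ι k 0)

/-- The generator `c` of `P(f,g)`. -/
def Pc (k : Type) [Field k] (f g : k[X]) : PAlg k f g :=
  RingQuot.mkAlgHom k (PRel k f g) (FreeAlgebra.ι k 1)

/-- The generator `d` of `P(f,g)`. -/
def Pd (k : Type) [Field k] (f g : k[X]) : PAlg k f g :=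
  RingQuot.mkAlgHom k (PRel k f g) (FreeAlgebra.ι k 2)

/-- The element `u = d - a` of `P(f,g)`. -/
def Pu (k : Type) [Field k] (f g : k[X]) : PAlg k f g := Pd k f g - Pa k f g

lemma comm_aeval {R A : Type*} [CommSemiring R] [Semiring A] [Algebra R A]
    {x y : A} (h : Commute x y) (p : R[X]) : Commute x (aeval y p) := by
  induction p using Polynomial.induction_on' with
  | add p q hp hq => simpa [map_add] using hp.add_right hq
  | monomial n r =>
      simpa [aeval_monomial] using
        (Commute.mul_right ((Algebra.commutes r x).symm) (h.pow_right n))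

section rels

variable (k : Type) [Field k] (f g : k[X])

lemma relAC : Pa k f g * Pc k f g = Pc k f g * Pa k f g + aeval (Pc k f g) f := by
  have := RingQuot.mkAlgHom_rel k (PRel.ac (k := k) (f := f) (g := g))
  simpa [Pa, Pc, map_mul, map_add, aeval_algHom_apply] using this

lemma relDC : Pd k f g * Pc k f g = Pc k f g * Pd k f g + aeval (Pc k f g) f := by
  have := RingQuot.mkAlgHom_rel k (PRel.dc (k := k) (f := f) (g := g))
  simpa [Pd, Pc, map_mul, map_add, aeval_algHom_apply] using this

lemma relDA : Pd k f g * Pa k f g =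
    (Pa k f g - aeval (Pc k f g) g) * Pd k f g + aeval (Pc k f g) g * Pa k f g := by
  have := RingQuot.mkAlgHom_rel k (PRel.da (k := k) (f := f) (g := g))
  simpa [Pa, Pc, Pd, map_mul, map_add, map_sub, aeval_algHom_apply] using this

lemma huc : Pu k f g * Pc k f g = Pc k f g * Pu k f g := by
  rw [Pu, sub_mul, relDC, relAC, mul_sub]; abel

lemma hua : Pu k f g * Pa k f g = (Pa k f g - aeval (Pc k f g) g) * Pu k f g := by
  rw [Pu, sub_mul, relDA, mul_sub, sub_mul, sub_mul]; abel

lemma hug : Pu k f g * aeval (Pc k f g) g = aeval (Pc k f g) g * Pu k f g :=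
  comm_aeval (huc k f g) g

lemma hud : Pu k f g * Pd k f g = (Pd k f g - aeval (Pc k f g) g) * Pu k f g := by
  have h1 : Pd k f g = Pa k f g + Pu k f g := by rw [Pu]; abel
  calc Pu k f g * Pd k f g = Pu k f g * Pa k f g + Pu k f g * Pu k f g := by
        rw [h1, mul_add]
    _ = (Pa k f g - aeval (Pc k f g) g) * Pu k f g + Pu k f g * Pu k f g := by rw [hua]
    _ = (Pd k f g - aeval (Pc k f g) g) * Pu k f g := by rw [h1]; noncomm_ring

lemma left_to_right (x : PAlg k f g) : ∃ y, Pu k f g * x = y * Pu k f g := by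
  obtain ⟨w, rfl⟩ := RingQuot.mkAlgHom_surjective k (PRel k f g) x
  induction w using FreeAlgebra.induction with
  | grade0 r =>
      exact ⟨algebraMap k _ r, by
        rw [AlgHom.commutes, Algebra.commutes]⟩
  | grade1 i =>
      fin_cases i
      · exact ⟨Pa k f g - aeval (Pc k f g) g, hua k f g⟩
      · exact ⟨Pc k f g, huc k f g⟩
      · exact ⟨Pd k f g - aeval (Pc k f g) g, hud k f g⟩
  | mul x y hx hy =>
      obtain ⟨p, hp⟩ := hx; obtain ⟨q, hq⟩ := hy
      exact ⟨p * q, by rw [map_mul, ← mul_assoc, hp, mul_assoc, hq, ← mul_assoc]⟩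
  | add x y hx hy =>
      obtain ⟨p, hp⟩ := hx; obtain ⟨q, hq⟩ := hy
      exact ⟨p + q, by rw [map_add, mul_add, hp, hq, add_mul]⟩

lemma right_to_left (x : PAlg k f g) : ∃ y, x * Pu k f g = Pu k f g * y := by
  obtain ⟨w, rfl⟩ := RingQuot.mkAlgHom_surjective k (PRel k f g) x
  induction w using FreeAlgebra.induction with
  | grade0 r =>
      exact ⟨algebraMap k _ r, by
        rw [AlgHom.commutes, Algebra.commutes]⟩
  | grade1 i =>
      fin_cases i
      · refine ⟨Pa k f g + aeval (Pc k f g) g, ?_⟩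
        rw [mul_add, hua, hug, sub_mul]; abel
      · exact ⟨Pc k f g, (huc k f g).symm⟩
      · refine ⟨Pd k f g + aeval (Pc k f g) g, ?_⟩
        rw [mul_add, hud, hug, sub_mul]; abel
  | mul x y hx hy =>
      obtain ⟨p, hp⟩ := hx; obtain ⟨q, hq⟩ := hy
      exact ⟨p * q, by rw [map_mul, mul_assoc, hq, ← mul_assoc, hp, mul_assoc]⟩
  | add x y hx hy =>
      obtain ⟨p, hp⟩ := hx; obtain ⟨q, hq⟩ := hy
      exact ⟨p + q, by rw [map_add, add_mul, hp, hq, mul_add]⟩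

end rels

theorem stmt2 (k : Type) [Field k] [IsAlgClosed k] [CharZero k] (f g : k[X]) :
    Pu k f g * Pc k f g = Pc k f g * Pu k f g ∧
    Pu k f g * Pa k f g = (Pa k f g - aeval (Pc k f g) g) * Pu k f g ∧
    Set.range (fun x : PAlg k f g => Pu k f g * x) =
      Set.range (fun x : PAlg k f g => x * Pu k f g) := by
  refine ⟨huc k f g, hua k f g, ?_⟩
  ext z
  constructor
  · rintro ⟨x, rfl⟩
    obtain ⟨y, hy⟩ := left_to_right k f g x
    exact ⟨y, hy.symm⟩
  · rintro ⟨x, rfl⟩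
    obtain ⟨y, hy⟩ := right_to_left k f g x
    exact ⟨y, hy.symm⟩
end
end

section
/- Let α ∈ k with f(α) = 0, and write f = (X − α)·f₀ with f₀ ∈ k[X]. Then in P(f,g) one has a·(c − α) = (c − α)·(a + f₀(c)) and d·(c − α) = (c − α)·(d + f₀(c)); in particular c − α is normal, i.e. (c − α)·P(f,g) = P(f,g)·(c − α). -/
open Polynomial

noncomputable section

theorem stmt3 (k : Type) [Field k] [IsAlgClosed k] [CharZero k] (f g : k[X])
    (α : k) (hα : f.eval α = 0) (f₀ : k[X]) (hf₀ : f = (X - C α) * f₀) :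
    Pa k f g * (Pc k f g - algebraMap k (PAlg k f g) α) =
      (Pc k f g - algebraMap k (PAlg k f g) α) * (Pa k f g + aeval (Pc k f g) f₀) ∧
    Pd k f g * (Pc k f g - algebraMap k (PAlg k f g) α) =
      (Pc k f g - algebraMap k (PAlg k f g) α) * (Pd k f g + aeval (Pc k f g) f₀) ∧
    Set.range (fun x : PAlg k f g => (Pc k f g - algebraMap k (PAlg k f g) α) * x) =
      Set.range (fun x : PAlg k f g => x * (Pc k f g - algebraMap k (PAlg k f g) α)) := by
  set q : PAlg k f g := Pc k f g - algebraMap k (PAlg k f g) α with hq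
  -- relations in the quotient
  have hac : Pa k f g * Pc k f g = Pc k f g * Pa k f g + aeval (Pc k f g) f := by
    have h := RingQuot.mkAlgHom_rel k (PRel.ac (k := k) (f := f) (g := g))
    simpa [Pa, Pc, map_mul, map_add, ← Polynomial.aeval_algHom_apply] using h
  have hdc : Pd k f g * Pc k f g = Pc k f g * Pd k f g + aeval (Pc k f g) f := by
    have h := RingQuot.mkAlgHom_rel k (PRel.dc (k := k) (f := f) (g := g))
    simpa [Pd, Pc, map_mul, map_add, ← Polynomial.aeval_algHom_apply] using h
  -- f(c) = q * f₀(c)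
  have hfc : aeval (Pc k f g) f = q * aeval (Pc k f g) f₀ := by
    have h2 : aeval (Pc k f g) f = aeval (Pc k f g) ((X - C α) * f₀) :=
      congrArg _ hf₀
    rw [h2, map_mul, map_sub, aeval_X, aeval_C]
  -- q commutes with every polynomial in c
  have hqcomm : ∀ p : k[X], Commute q (aeval (Pc k f g) p) := by
    intro p
    induction p using Polynomial.induction_on with
    | C r => simpa [Commute, SemiconjBy] using (Algebra.commutes r q).symm
    | add p₁ p₂ h₁ h₂ => simpa [map_add] using h₁.add_right h₂
    | monomial n r hn =>
        have hqc : Commute q (Pc k f g) := by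
          rw [hq]; exact (Commute.refl (Pc k f g)).sub_left (Algebra.commutes α _)
        simp only [map_mul, aeval_C, aeval_X, pow_succ, ← mul_assoc] at hn ⊢
        exact hn.mul_right hqc
  have hqc : Commute q (Pc k f g) := by simpa using hqcomm X
  have ha : Pa k f g * q = q * (Pa k f g + aeval (Pc k f g) f₀) := by
    have h1 : Pa k f g * q
        = Pa k f g * Pc k f g - Pa k f g * algebraMap k (PAlg k f g) α :=
      mul_sub _ _ _
    have h2 : q * Pa k f g
        = Pc k f g * Pa k f g - algebraMap k (PAlg k f g) α * Pa k f g :=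
      sub_mul _ _ _
    rw [h1, hac, hfc, ← Algebra.commutes α (Pa k f g), mul_add, h2]
    abel
  have hd : Pd k f g * q = q * (Pd k f g + aeval (Pc k f g) f₀) := by
    have h1 : Pd k f g * q
        = Pd k f g * Pc k f g - Pd k f g * algebraMap k (PAlg k f g) α :=
      mul_sub _ _ _
    have h2 : q * Pd k f g
        = Pc k f g * Pd k f g - algebraMap k (PAlg k f g) α * Pd k f g :=
      sub_mul _ _ _
    rw [h1, hdc, hfc, ← Algebra.commutes α (Pd k f g), mul_add, h2]
    abel
  have ha' : q * Pa k f g = (Pa k f g - aeval (Pc k f g) f₀) * q := by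
    conv_rhs => rw [sub_mul]
    rw [ha, ← (hqcomm f₀).eq, mul_add, add_sub_cancel_right]
  have hd' : q * Pd k f g = (Pd k f g - aeval (Pc k f g) f₀) * q := by
    conv_rhs => rw [sub_mul]
    rw [hd, ← (hqcomm f₀).eq, mul_add, add_sub_cancel_right]
  refine ⟨ha, hd, ?_⟩
  -- normality
  have key : ∀ z : FreeAlgebra k (Fin 3),
      (∃ y, RingQuot.mkAlgHom k (PRel k f g) z * q = q * y) ∧
      (∃ y, q * RingQuot.mkAlgHom k (PRel k f g) z = y * q) := by
    intro z
    induction z using FreeAlgebra.induction with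
    | grade0 r =>
        refine ⟨⟨algebraMap k _ r, ?_⟩, ⟨algebraMap k _ r, ?_⟩⟩ <;>
          simp [Algebra.commutes]
    | grade1 i =>
        fin_cases i
        · exact ⟨⟨Pa k f g + aeval (Pc k f g) f₀, ha⟩,
            ⟨Pa k f g - aeval (Pc k f g) f₀, ha'⟩⟩
        · exact ⟨⟨Pc k f g, hqc.symm.eq⟩, ⟨Pc k f g, hqc.eq⟩⟩
        · exact ⟨⟨Pd k f g + aeval (Pc k f g) f₀, hd⟩,
            ⟨Pd k f g - aeval (Pc k f g) f₀, hd'⟩⟩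
    | mul x y hx hy =>
        obtain ⟨⟨x₁, hx₁⟩, ⟨x₂, hx₂⟩⟩ := hx
        obtain ⟨⟨y₁, hy₁⟩, ⟨y₂, hy₂⟩⟩ := hy
        rw [map_mul]
        exact ⟨⟨x₁ * y₁, by rw [mul_assoc, hy₁, ← mul_assoc, hx₁, mul_assoc]⟩,
          ⟨x₂ * y₂, by rw [← mul_assoc, hx₂, mul_assoc, hy₂, ← mul_assoc]⟩⟩
    | add x y hx hy =>
        obtain ⟨⟨x₁, hx₁⟩, ⟨x₂, hx₂⟩⟩ := hx
        obtain ⟨⟨y₁, hy₁⟩, ⟨y₂, hy₂⟩⟩ := hy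
        rw [map_add]
        exact ⟨⟨x₁ + y₁, by rw [add_mul, hx₁, hy₁, mul_add]⟩,
          ⟨x₂ + y₂, by rw [mul_add, hx₂, hy₂, add_mul]⟩⟩
  ext w
  simp only [Set.mem_range]
  constructor
  · rintro ⟨x, rfl⟩
    obtain ⟨z, rfl⟩ := RingQuot.mkAlgHom_surjective k (PRel k f g) x
    obtain ⟨y, hy⟩ := (key z).2
    exact ⟨y, hy.symm⟩
  · rintro ⟨x, rfl⟩
    obtain ⟨z, rfl⟩ := RingQuot.mkAlgHom_surjective k (PRel k f g) x
    obtain ⟨y, hy⟩ := (key z).1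
    exact ⟨y, hy.symm⟩
end
end

section
/- Let α ∈ k with f(α) = 0. The quotient of P(f,g) by the two-sided ideal generated by u = d − a and c − α is isomorphic as a k-algebra to the polynomial ring k[X], via the map induced by a ↦ X, d ↦ X, c ↦ α. -/
open Polynomial

noncomputable section

/-- The relations identifying `u = d - a` and `c - α` with `0`; quotienting `P(f,g)` by them
realizes the quotient by the two-sided ideal generated by `u` and `c - α`. -/
inductive UCRel (k : Type) [Field k] (f g : k[X]) (α : k) : PAlg k f g → PAlg k f g → Prop
  | u : UCRel k f g α (Pu k f g) 0
  | c : UCRel k f g α (Pc k f g - algebraMap k (PAlg k f g) α) 0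

section Aux

variable (k : Type) [Field k] (f g : k[X]) (α : k)

/-- free algebra to k[X] -/
def free2poly : FreeAlgebra k (Fin 3) →ₐ[k] k[X] :=
  FreeAlgebra.lift k (fun i => if i = 1 then C α else X)

lemma free2poly_i0 : free2poly k α (FreeAlgebra.ι k 0) = X := by
  rw [free2poly, FreeAlgebra.lift_ι_apply]; rfl

lemma free2poly_i1 : free2poly k α (FreeAlgebra.ι k 1) = C α := by
  rw [free2poly, FreeAlgebra.lift_ι_apply]; rfl

lemma free2poly_i2 : free2poly k α (FreeAlgebra.ι k 2) = X := by
  rw [free2poly, FreeAlgebra.lift_ι_apply]; rfl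

lemma free2poly_rel (hα : f.eval α = 0) {x y : FreeAlgebra k (Fin 3)}
    (h : PRel k f g x y) : free2poly k α x = free2poly k α y := by
  have hC : ∀ p : k[X], free2poly k α (aeval (FreeAlgebra.ι k 1) p) = C (p.eval α) := by
    intro p
    rw [← Polynomial.aeval_algHom_apply,
      free2poly_i1,
      ← Polynomial.algebraMap_eq, aeval_algebraMap_apply_eq_algebraMap_eval,
      Polynomial.algebraMap_eq]
  induction h with
  | ac =>
      rw [map_mul, map_add, hC, map_mul, hα, map_zero, add_zero,
        free2poly_i0, free2poly_i1, mul_comm]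
  | dc =>
      rw [map_mul, map_add, hC, map_mul, hα, map_zero, add_zero,
        free2poly_i2, free2poly_i1, mul_comm]
  | da =>
      rw [map_mul, map_add, map_mul, map_mul, map_sub, hC,
        free2poly_i0, free2poly_i2]
      ring

/-- P(f,g) to k[X] -/
def palg2poly (hα : f.eval α = 0) : PAlg k f g →ₐ[k] k[X] :=
  RingQuot.liftAlgHom k ⟨free2poly k α, fun _ _ h => free2poly_rel k f g α hα h⟩

lemma palg2poly_a : palg2poly k f g α hα (Pa k f g) = X := by
  rw [Pa, palg2poly, RingQuot.liftAlgHom_mkAlgHom_apply, free2poly_i0]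

lemma palg2poly_c : palg2poly k f g α hα (Pc k f g) = C α := by
  rw [Pc, palg2poly, RingQuot.liftAlgHom_mkAlgHom_apply, free2poly_i1]

lemma palg2poly_d : palg2poly k f g α hα (Pd k f g) = X := by
  rw [Pd, palg2poly, RingQuot.liftAlgHom_mkAlgHom_apply, free2poly_i2]

/-- forward map -/
def fwd (hα : f.eval α = 0) : RingQuot (UCRel k f g α) →ₐ[k] k[X] :=
  RingQuot.liftAlgHom k ⟨palg2poly k f g α hα, by
    intro x y h
    induction h with
    | u => simp [Pu, palg2poly_a, palg2poly_d]
    | c => simp [palg2poly_c, algebraMap_eq]⟩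

def bwd : k[X] →ₐ[k] RingQuot (UCRel k f g α) :=
  aeval (RingQuot.mkAlgHom k (UCRel k f g α) (Pa k f g))

end Aux

theorem stmt5 (k : Type) [Field k] [IsAlgClosed k] [CharZero k] (f g : k[X])
    (α : k) (hα : f.eval α = 0) :
    ∃ e : RingQuot (UCRel k f g α) ≃ₐ[k] k[X],
      e (RingQuot.mkAlgHom k (UCRel k f g α) (Pa k f g)) = X ∧
      e (RingQuot.mkAlgHom k (UCRel k f g α) (Pd k f g)) = X ∧
      e (RingQuot.mkAlgHom k (UCRel k f g α) (Pc k f g)) = C α := by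
  have hfa : ∀ z, fwd k f g α hα (RingQuot.mkAlgHom k (UCRel k f g α) z)
      = palg2poly k f g α hα z := fun z => RingQuot.liftAlgHom_mkAlgHom_apply ..
  have hda : RingQuot.mkAlgHom k (UCRel k f g α) (Pd k f g)
      = RingQuot.mkAlgHom k (UCRel k f g α) (Pa k f g) := by
    have := RingQuot.mkAlgHom_rel k (UCRel.u (k := k) (f := f) (g := g) (α := α))
    rw [Pu, map_sub, map_zero, sub_eq_zero] at this
    exact this
  have hca : RingQuot.mkAlgHom k (UCRel k f g α) (Pc k f g)
      = algebraMap k _ α := by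
    have := RingQuot.mkAlgHom_rel k (UCRel.c (k := k) (f := f) (g := g) (α := α))
    rw [map_sub, map_zero, sub_eq_zero, AlgHom.commutes] at this
    exact this
  refine ⟨AlgEquiv.ofAlgHom (fwd k f g α hα) (bwd k f g α) ?_ ?_, ?_, ?_, ?_⟩
  · apply Polynomial.algHom_ext
    simp [bwd, hfa, palg2poly_a]
  · apply RingQuot.ringQuot_ext'
    apply RingQuot.ringQuot_ext'
    apply FreeAlgebra.hom_ext
    funext i
    simp only [AlgHom.comp_apply, AlgHom.coe_comp, Function.comp_apply, AlgHom.coe_id, id_eq]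
    fin_cases i
    · show bwd k f g α (fwd k f g α hα (RingQuot.mkAlgHom k (UCRel k f g α)
        (RingQuot.mkAlgHom k (PRel k f g) (FreeAlgebra.ι k 0)))) = _
      rw [hfa, show RingQuot.mkAlgHom k (PRel k f g) (FreeAlgebra.ι k 0) = Pa k f g from rfl,
        palg2poly_a]
      simp only [bwd, aeval_X]
      rfl
    · show bwd k f g α (fwd k f g α hα (RingQuot.mkAlgHom k (UCRel k f g α)
        (RingQuot.mkAlgHom k (PRel k f g) (FreeAlgebra.ι k 1)))) = _
      rw [hfa, show RingQuot.mkAlgHom k (PRel k f g) (FreeAlgebra.ι k 1) = Pc k f g from rfl,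
        palg2poly_c]
      simp only [bwd, aeval_C]
      exact hca.symm
    · show bwd k f g α (fwd k f g α hα (RingQuot.mkAlgHom k (UCRel k f g α)
        (RingQuot.mkAlgHom k (PRel k f g) (FreeAlgebra.ι k 2)))) = _
      rw [hfa, show RingQuot.mkAlgHom k (PRel k f g) (FreeAlgebra.ι k 2) = Pd k f g from rfl,
        palg2poly_d]
      simp only [bwd, aeval_X]
      exact hda.symm
  · show fwd k f g α hα _ = _
    simp [AlgEquiv.ofAlgHom, hfa, palg2poly_a]
  · show fwd k f g α hα _ = _
    simp [AlgEquiv.ofAlgHom, hfa, palg2poly_d]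
  · show fwd k f g α hα _ = _
    simp [AlgEquiv.ofAlgHom, hfa, palg2poly_c]
end
end

section
/- Let α ∈ k with f(α) = 0 and g(α) = 0. The quotient of P(f,g) by the two-sided ideal generated by c − α is isomorphic as a k-algebra to the commutative polynomial ring k[x,y] in two variables, via the map induced by a ↦ x, d ↦ y, c ↦ α. -/
open Polynomial

noncomputable section

/-- The relation identifying `c - α` with `0`; quotienting `P(f,g)` by it realizes
the quotient by the two-sided ideal generated by `c - α`. -/
inductive CRel (k : Type) [Field k] (f g : k[X]) (α : k) : PAlg k f g → PAlg k f g → Prop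
  | c : CRel k f g α (Pc k f g - algebraMap k (PAlg k f g) α) 0

theorem stmt6 (k : Type) [Field k] [IsAlgClosed k] [CharZero k] (f g : k[X])
    (α : k) (hfα : f.eval α = 0) (hgα : g.eval α = 0) :
    ∃ e : RingQuot (CRel k f g α) ≃ₐ[k] MvPolynomial (Fin 2) k,
      e (RingQuot.mkAlgHom k (CRel k f g α) (Pa k f g)) = MvPolynomial.X 0 ∧
      e (RingQuot.mkAlgHom k (CRel k f g α) (Pd k f g)) = MvPolynomial.X 1 ∧
      e (RingQuot.mkAlgHom k (CRel k f g α) (Pc k f g)) =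
        algebraMap k (MvPolynomial (Fin 2) k) α := by
  classical
  set Q := RingQuot (CRel k f g α) with hQ
  set p := RingQuot.mkAlgHom k (PRel k f g) with hp
  set q := RingQuot.mkAlgHom k (CRel k f g α) with hq
  -- forward map on the free algebra
  set toMv : FreeAlgebra k (Fin 3) →ₐ[k] MvPolynomial (Fin 2) k :=
    FreeAlgebra.lift k ![MvPolynomial.X 0, MvPolynomial.C α, MvPolynomial.X 1] with htoMv
  have htoMv0 : toMv (FreeAlgebra.ι k 0) = MvPolynomial.X 0 := by simp [htoMv]
  have htoMv1 : toMv (FreeAlgebra.ι k 1) = MvPolynomial.C α := by simp [htoMv]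
  have htoMv2 : toMv (FreeAlgebra.ι k 2) = MvPolynomial.X 1 := by simp [htoMv]
  have haf : aeval (MvPolynomial.C α : MvPolynomial (Fin 2) k) f = 0 := by
    rw [← MvPolynomial.algebraMap_eq, aeval_algebraMap_apply_eq_algebraMap_eval, hfα, map_zero]
  have hag : aeval (MvPolynomial.C α : MvPolynomial (Fin 2) k) g = 0 := by
    rw [← MvPolynomial.algebraMap_eq, aeval_algebraMap_apply_eq_algebraMap_eval, hgα, map_zero]
  have hPrel : ∀ ⦃x y⦄, PRel k f g x y → toMv x = toMv y := by
    rintro x y ⟨⟩ <;>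
      simp [map_mul, map_add, map_sub, ← Polynomial.aeval_algHom_apply,
        htoMv0, htoMv1, htoMv2, haf, hag, mul_comm]
  set φ0 : PAlg k f g →ₐ[k] MvPolynomial (Fin 2) k :=
    RingQuot.liftAlgHom k ⟨toMv, hPrel⟩ with hφ0
  have hφ0a : φ0 (Pa k f g) = MvPolynomial.X 0 := by
    rw [hφ0, Pa, RingQuot.liftAlgHom_mkAlgHom_apply, htoMv0]
  have hφ0c : φ0 (Pc k f g) = MvPolynomial.C α := by
    rw [hφ0, Pc, RingQuot.liftAlgHom_mkAlgHom_apply, htoMv1]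
  have hφ0d : φ0 (Pd k f g) = MvPolynomial.X 1 := by
    rw [hφ0, Pd, RingQuot.liftAlgHom_mkAlgHom_apply, htoMv2]
  have hCrel : ∀ ⦃x y⦄, CRel k f g α x y → φ0 x = φ0 y := by
    rintro x y ⟨⟩
    simp [map_sub, hφ0c, AlgHom.commutes, MvPolynomial.algebraMap_eq]
  set φ : Q →ₐ[k] MvPolynomial (Fin 2) k := RingQuot.liftAlgHom k ⟨φ0, hCrel⟩ with hφ
  have hφq : ∀ x, φ (q x) = φ0 x := fun x => by
    rw [hφ, hq, RingQuot.liftAlgHom_mkAlgHom_apply]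
  -- c = α in Q
  have hqc : q (Pc k f g) = algebraMap k Q α := by
    have h := RingQuot.mkAlgHom_rel k (CRel.c (k := k) (f := f) (g := g) (α := α))
    rw [map_sub, map_zero, sub_eq_zero, AlgHom.commutes] at h
    exact h
  -- relations in Q
  set A : Q := q (Pa k f g) with hA
  set D : Q := q (Pd k f g) with hD
  have haevalf : aeval (q (Pc k f g)) f = 0 := by
    rw [hqc, aeval_algebraMap_apply_eq_algebraMap_eval, hfα, map_zero]
  have haevalg : aeval (q (Pc k f g)) g = 0 := by
    rw [hqc, aeval_algebraMap_apply_eq_algebraMap_eval, hgα, map_zero]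
  have hDA : D * A = A * D := by
    have h := congrArg (⇑q) (RingQuot.mkAlgHom_rel k (PRel.da (k := k) (f := f) (g := g)))
    simp only [← hp, map_mul, map_add, map_sub, ← Polynomial.aeval_algHom_apply] at h
    rw [show p (FreeAlgebra.ι k 1) = Pc k f g from rfl,
        show p (FreeAlgebra.ι k 0) = Pa k f g from rfl,
        show p (FreeAlgebra.ι k 2) = Pd k f g from rfl] at h
    rw [haevalg] at h
    refine h.trans ?_
    have e1 : (A - 0) * D + 0 * A = A * D + 0 * A :=
      congrArg (fun t => t * D + 0 * A) (sub_zero A)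
    have e2 : A * D + 0 * A = A * D + 0 := congrArg (fun t => A * D + t) (zero_mul A)
    exact e1.trans (e2.trans (add_zero (A * D)))
  have hAC : A * q (Pc k f g) = q (Pc k f g) * A := by
    rw [hqc, Algebra.commutes]
  have hDC : D * q (Pc k f g) = q (Pc k f g) * D := by
    rw [hqc, Algebra.commutes]
  -- commutativity of Q
  have hsurj : Function.Surjective (q.comp p) := by
    exact (RingQuot.mkAlgHom_surjective k _).comp (RingQuot.mkAlgHom_surjective k _)
  have hadj : Algebra.adjoin k
      (Set.range (fun i : Fin 3 => q (p (FreeAlgebra.ι k i)))) = ⊤ := by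
    have : (Set.range fun i : Fin 3 => q (p (FreeAlgebra.ι k i)))
        = (q.comp p) '' Set.range (FreeAlgebra.ι k) := by
      rw [← Set.range_comp]; rfl
    rw [this, ← AlgHom.map_adjoin, FreeAlgebra.adjoin_range_ι, Algebra.map_top]
    exact (AlgHom.range_eq_top (f := q.comp p)).mpr hsurj
  have hgen : ∀ i j : Fin 3, q (p (FreeAlgebra.ι k i)) * q (p (FreeAlgebra.ι k j))
      = q (p (FreeAlgebra.ι k j)) * q (p (FreeAlgebra.ι k i)) := by
    have e0 : q (p (FreeAlgebra.ι k 0)) = A := rfl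
    have e1 : q (p (FreeAlgebra.ι k 1)) = q (Pc k f g) := rfl
    have e2 : q (p (FreeAlgebra.ι k 2)) = D := rfl
    intro i j
    fin_cases i <;> fin_cases j <;>
      first
        | rfl
        | exact hAC | exact hAC.symm
        | exact hDA | exact hDA.symm
        | exact hDC | exact hDC.symm
  have hcomm : ∀ x y : Q, x * y = y * x := by
    intro x y
    have hx : x ∈ Algebra.adjoin k
        (Set.range (fun i : Fin 3 => q (p (FreeAlgebra.ι k i)))) := hadj ▸ trivial
    have hy : y ∈ Algebra.adjoin k
        (Set.range (fun i : Fin 3 => q (p (FreeAlgebra.ι k i)))) := hadj ▸ trivial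
    induction hx, hy using Algebra.adjoin_induction₂ with
    | mem_mem x y hx hy =>
      obtain ⟨i, rfl⟩ := hx; obtain ⟨j, rfl⟩ := hy; exact hgen i j
    | algebraMap_both r₁ r₂ => rw [← map_mul, ← map_mul, mul_comm]
    | algebraMap_left r x _ => exact Algebra.commutes r x
    | algebraMap_right r x _ => exact (Algebra.commutes r x).symm
    | add_left x y z _ _ _ h1 h2 => rw [add_mul, mul_add, h1, h2]
    | add_right x y z _ _ _ h1 h2 => rw [mul_add, add_mul, h1, h2]
    | mul_left x y z _ _ _ h1 h2 => rw [mul_assoc, h2, ← mul_assoc, h1, mul_assoc]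
    | mul_right x y z _ _ _ h1 h2 => rw [← mul_assoc, h1, mul_assoc, h2, ← mul_assoc]
  letI : CommRing Q := { (inferInstance : Ring Q) with mul_comm := hcomm }
  set ψ : MvPolynomial (Fin 2) k →ₐ[k] Q := MvPolynomial.aeval ![A, D] with hψ
  have hψ0 : ψ (MvPolynomial.X 0) = A := by simp [hψ]
  have hψ1 : ψ (MvPolynomial.X 1) = D := by simp [hψ]
  have hfg : φ.comp ψ = AlgHom.id k (MvPolynomial (Fin 2) k) := by
    apply MvPolynomial.algHom_ext
    intro i
    fin_cases i
    · show φ (ψ (MvPolynomial.X 0)) = MvPolynomial.X 0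
      rw [hψ0, hA, hφq, hφ0a]
    · show φ (ψ (MvPolynomial.X 1)) = MvPolynomial.X 1
      rw [hψ1, hD, hφq, hφ0d]
  have hgf : ψ.comp φ = AlgHom.id k Q := by
    have key : ((ψ.comp φ).comp q).comp p = (AlgHom.id k Q).comp (q.comp p) := by
      apply FreeAlgebra.hom_ext
      funext i
      fin_cases i
      · show ψ (φ (q (p (FreeAlgebra.ι k 0)))) = q (p (FreeAlgebra.ι k 0))
        rw [show p (FreeAlgebra.ι k 0) = Pa k f g from rfl, hφq, hφ0a, ← hA, hψ0]
      · show ψ (φ (q (p (FreeAlgebra.ι k 1)))) = q (p (FreeAlgebra.ι k 1))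
        rw [show p (FreeAlgebra.ι k 1) = Pc k f g from rfl, hφq, hφ0c,
          ← MvPolynomial.algebraMap_eq, AlgHom.commutes, hqc]
      · show ψ (φ (q (p (FreeAlgebra.ι k 2)))) = q (p (FreeAlgebra.ι k 2))
        rw [show p (FreeAlgebra.ι k 2) = Pd k f g from rfl, hφq, hφ0d, ← hD, hψ1]
    apply AlgHom.ext
    intro x
    obtain ⟨y, rfl⟩ := hsurj x
    simpa using AlgHom.congr_fun key y
  refine ⟨AlgEquiv.ofAlgHom φ ψ hfg hgf, ?_, ?_, ?_⟩
  · show φ (q (Pa k f g)) = _; rw [hφq, hφ0a]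
  · show φ (q (Pd k f g)) = _; rw [hφq, hφ0d]
  · show φ (q (Pc k f g)) = _; rw [hφq, hφ0c, MvPolynomial.algebraMap_eq]
end
end
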